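/- arXiv:1203.0685 — 3 statements merged into one kernel-verified Lean document; each statement's English description precedes it below -/
import Mathlib

section
/- For all integers v ≥ 1, the type I number β(v, 3) equals v + 1. -/
theorem typeI_three_eq_succ_general
    (β : ℕ → ℕ → ℕ)
    (h2 : ∀ v, 1 ≤ v → β v 2 = 1)
    (h3 : ∀ r, 3 ≤ r → β 1 r = β 2 (r - 1) + β 1 (r - 1))
    (h5 : ∀ v, 2 ≤ v → ∀ r, 3 ≤ r → β v r = β (v + 1) (r - 1) + β (v - 1) r) :
    ∀ v, 1 ≤ v → β v 3 = v + 1 := by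
  intro v hv
  induction v, hv using Nat.le_induction with
  | base => rw [h3 3 le_rfl, h2 2 (by norm_num), h2 1 le_rfl]
  | succ n hn ih =>
    rw [h5 (n + 1) (by omega) 3 le_rfl, h2 (n + 1 + 1) (by omega), Nat.add_sub_cancel, ih]
    omega

/-- For all integers `v ≥ 1`, the type I number `β(v, 3)` equals `v + 1`. -/
theorem typeI_three_eq_succ
    (β : ℕ → ℕ → ℕ)
    (h1 : ∀ v, β v 1 = 1)
    (h2 : ∀ v, 1 ≤ v → β v 2 = 1)
    (h3 : ∀ r, 3 ≤ r → β 1 r = β 2 (r - 1) + β 1 (r - 1))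
    (h4 : ∀ r, 2 ≤ r → β 0 r = β 1 (r - 1))
    (h5 : ∀ v, 2 ≤ v → ∀ r, 3 ≤ r → β v r = β (v + 1) (r - 1) + β (v - 1) r) :
    ∀ v, 1 ≤ v → β v 3 = v + 1 :=
  typeI_three_eq_succ_general β h2 h3 h5
end

section
/- Let G : ℝ → ℝ be a continuous function with 0 ≤ G ≤ 1, let x ≤ z be reals, and for j ≥ 1 define m_j(q, z) = ∫_q^z ((t - q)^{j-1} / (j-1)!) (1 - G(t)) dt. For ν ≥ 0 and j ≥ 1 define h_j^ν(2) = ∫_x^z ∫_p^z ((q - p)^ν / ν!) m_j(q, z) dq dp. Then for all j ≥ 1 and ν ≥ 0, h_j^ν(2) = m_{j+ν+2}(x, z). -/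
/-!
Writing `m_{n+1}(p, z) = ∫_p^z (t - p)^n / n! f(t) dt`, one has `∂_p m_{n+2} = -m_{n+1}` and
`∂_p m_1 = -f`, while every `m_k(z, z) = 0`. Integrating `(q - p)^ν / ν! · m_{n+1}(q, z)` by parts
in `q` therefore trades one power of `(q - p)` for one index of `m`, and induction on `n` gives
Cauchy's formula `∫_p^z (q - p)^ν / ν! · m_{n+1}(q, z) dq = m_{n+ν+2}(p, z)` for repeated
integration. Its case `ν = 0`, `m_{n+2}(p, z) = ∫_p^z m_{n+1}(q, z) dq`, is what supplies the
derivative of `m_{n+2}` needed at the next step of the induction.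
-/

open intervalIntegral MeasureTheory
open scoped Nat

/-- `moment f z n p` is the paper's `m_{n+1}(p, z)` for `f = 1 - G`. -/
noncomputable def moment (f : ℝ → ℝ) (z : ℝ) (n : ℕ) (p : ℝ) : ℝ :=
  ∫ t in p..z, (t - p) ^ n / n ! * f t

lemma hasDerivAt_sub_pow_succ_div_factorial (p : ℝ) (ν : ℕ) (q : ℝ) :
    HasDerivAt (fun q => (q - p) ^ (ν + 1) / (ν + 1)!) ((q - p) ^ ν / ν !) q := by
  refine ((((hasDerivAt_id' q).sub_const p).fun_pow (ν + 1)).div_const _).congr_deriv ?_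
  rw [Nat.factorial_succ, Nat.add_sub_cancel]
  push_cast
  field_simp

/-- Integration by parts against `(q - p)^ν / ν!`: the boundary terms vanish at `q = p` because of
the power and at `q = z` because `u z = 0`. -/
lemma integral_sub_pow_div_factorial_mul_of_hasDerivAt {u g : ℝ → ℝ} {p z : ℝ}
    (hu : ∀ q ∈ Set.uIcc p z, HasDerivAt u (-g q) q) (hg : IntervalIntegrable g volume p z)
    (huz : u z = 0) (ν : ℕ) :
    ∫ q in p..z, (q - p) ^ ν / ν ! * u q = ∫ q in p..z, (q - p) ^ (ν + 1) / (ν + 1)! * g q := by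
  have parts := integral_mul_deriv_eq_deriv_mul hu
    (fun q _ => hasDerivAt_sub_pow_succ_div_factorial p ν q) hg.neg
    ((by fun_prop : Continuous fun q : ℝ => (q - p) ^ ν / ν !).intervalIntegrable _ _)
  simp only [huz, sub_self, zero_pow (Nat.succ_ne_zero ν), zero_div, zero_mul, mul_zero,
    zero_sub, neg_mul, intervalIntegral.integral_neg, neg_neg] at parts
  simp only [mul_comm _ (u _), mul_comm _ (g _)]
  exact parts

lemma moment_self (f : ℝ → ℝ) (z : ℝ) (n : ℕ) : moment f z n z = 0 :=
  integral_same

variable {f : ℝ → ℝ} {z : ℝ}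

lemma continuous_moment (hf : Continuous f) (n : ℕ) : Continuous (moment f z n) := by
  have h := continuous_parametric_intervalIntegral_of_continuous (μ := volume) (a₀ := z)
    (f := fun p t => (t - p) ^ n / n ! * f t) (by fun_prop) continuous_id
  convert h.neg using 1
  funext p
  simp [moment, integral_symm z p]

lemma hasDerivAt_moment_zero (hf : Continuous f) (p : ℝ) :
    HasDerivAt (moment f z 0) (-f p) p := by
  have h : moment f z 0 = fun p => ∫ t in p..z, f t := funext fun p => by simp [moment]
  rw [h]
  exact integral_hasDerivAt_left (hf.intervalIntegrable p z)
    (hf.stronglyMeasurableAtFilter _ _) hf.continuousAt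

theorem integral_sub_pow_div_factorial_mul_moment (hf : Continuous f) (n ν : ℕ) (p : ℝ) :
    ∫ q in p..z, (q - p) ^ ν / ν ! * moment f z n q = moment f z (n + ν + 1) p := by
  induction n generalizing ν p with
  | zero =>
    rw [integral_sub_pow_div_factorial_mul_of_hasDerivAt (fun q _ => hasDerivAt_moment_zero hf q)
      (hf.intervalIntegrable p z) (moment_self f z 0), zero_add]
    rfl
  | succ n ih =>
    have moment_succ_eq : moment f z (n + 1) = fun p => ∫ q in p..z, moment f z n q :=
      funext fun p => by simpa using (ih 0 p).symm
    have hd (q : ℝ) : HasDerivAt (moment f z (n + 1)) (-moment f z n q) q := by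
      have hc := continuous_moment (z := z) hf n
      rw [moment_succ_eq]
      exact integral_hasDerivAt_left (hc.intervalIntegrable q z) (hc.stronglyMeasurableAtFilter _ _)
        hc.continuousAt
    rw [integral_sub_pow_div_factorial_mul_of_hasDerivAt (fun q _ => hd q)
      ((continuous_moment hf n).intervalIntegrable p z) (moment_self f z _), ih]
    ring_nf

lemma moment_succ (hf : Continuous f) (n : ℕ) (p : ℝ) :
    moment f z (n + 1) p = ∫ q in p..z, moment f z n q := by
  simpa using (integral_sub_pow_div_factorial_mul_moment hf n 0 p).symm

theorem h_two_eq_moment_general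
    (G : ℝ → ℝ) (hG : Continuous G)
    (x z : ℝ)
    (j ν : ℕ) (hj : 1 ≤ j) :
    (∫ p in x..z, ∫ q in p..z, ((q - p) ^ ν / (ν.factorial : ℝ)) *
        (∫ t in q..z, ((t - q) ^ (j - 1) / ((j - 1).factorial : ℝ)) * (1 - G t)))
      = ∫ t in x..z,
          ((t - x) ^ (j + ν + 1) / ((j + ν + 1).factorial : ℝ)) * (1 - G t) := by
  have hf : Continuous fun t => 1 - G t := by fun_prop
  obtain ⟨k, rfl⟩ : ∃ k, j = k + 1 := ⟨j - 1, by omega⟩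
  calc _ = ∫ p in x..z, moment (fun t => 1 - G t) z (k + ν + 1) p :=
        integral_congr fun p _ => integral_sub_pow_div_factorial_mul_moment hf k ν p
    _ = moment (fun t => 1 - G t) z (k + 1 + ν + 1) x := by
        rw [moment_succ hf, add_right_comm k 1 ν]

/-- The base case `r = 2` of Lemma 3.1: `h_j^ν(2) = m_{j+ν+2}(x, z)`,
i.e. `β(ν, 2) = 1` for all `ν ≥ 0`, `j ≥ 1`. -/
theorem h_two_eq_moment
    (G : ℝ → ℝ) (hG : Continuous G)
    (hG0 : ∀ t, 0 ≤ G t) (hG1 : ∀ t, G t ≤ 1)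
    (x z : ℝ) (hxz : x ≤ z)
    (j ν : ℕ) (hj : 1 ≤ j) :
    (∫ p in x..z, ∫ q in p..z, ((q - p) ^ ν / (ν.factorial : ℝ)) *
        (∫ t in q..z, ((t - q) ^ (j - 1) / ((j - 1).factorial : ℝ)) * (1 - G t)))
      = ∫ t in x..z,
          ((t - x) ^ (j + ν + 1) / ((j + ν + 1).factorial : ℝ)) * (1 - G t) :=
  h_two_eq_moment_general G hG x z j ν hj
end

section
/- For every n ≥ 1, the central binomial coefficient satisfies binom(2n, n) = 2 Σ_{j=1}^{n} C_{j-1} binom(2(n-j), n-j), where C_m denotes the m-th Catalan number. -/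
/-!
Since `centralBinom k = (k + 1) * catalan k`, the right-hand side is `2 ∑ (k + 1) C_i C_k` over
`i + k = n - 1`. Averaging with the swapped sum replaces the weight `2 (k + 1)` by
`(i + 1) + (k + 1) = n + 1`, leaving `(n + 1)` times the Catalan convolution, i.e.
`(n + 1) * catalan n = centralBinom n`.
-/

open Finset

theorem Finset.Nat.sum_Icc_one_eq_sum_antidiagonal {M : Type*} [AddCommMonoid M] (n : ℕ)
    (f : ℕ → ℕ → M) :
    ∑ j ∈ Icc 1 (n + 1), f (j - 1) (n + 1 - j) = ∑ p ∈ antidiagonal n, f p.1 p.2 := by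
  refine sum_nbij' (fun j => (j - 1, n + 1 - j)) (fun p => p.1 + 1) ?_ ?_ ?_ ?_ ?_ <;>
    simp +contextual [mem_Icc] <;> omega

theorem two_mul_sum_antidiagonal_catalan_mul_centralBinom (m : ℕ) :
    2 * ∑ p ∈ antidiagonal m, catalan p.1 * p.2.centralBinom = (m + 1).centralBinom := by
  have weighted : ∀ p ∈ antidiagonal m,
      catalan p.1 * p.2.centralBinom = (p.2 + 1) * (catalan p.1 * catalan p.2) := by
    intro p _
    rw [← succ_mul_catalan_eq_centralBinom]; ring
  calc 2 * ∑ p ∈ antidiagonal m, catalan p.1 * p.2.centralBinom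
      = ∑ p ∈ antidiagonal m, ((p.1 + 1) + (p.2 + 1)) * (catalan p.1 * catalan p.2) := by
        rw [sum_congr rfl weighted, two_mul]
        nth_rw 1 [← Nat.sum_antidiagonal_swap]
        rw [← sum_add_distrib]
        refine sum_congr rfl fun p _ => ?_
        simp only [Prod.fst_swap, Prod.snd_swap]
        ring
    _ = (m + 2) * catalan (m + 1) := by
        rw [catalan_succ', mul_sum]
        refine sum_congr rfl fun p hp => ?_
        rw [← HasAntidiagonal.mem_antidiagonal.mp hp]; ring
    _ = (m + 1).centralBinom := succ_mul_catalan_eq_centralBinom (m + 1)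

/-- The Catalan–central-binomial convolution identity:
`binom(2n, n) = 2 ∑_{j=1}^{n} C_{j-1} binom(2(n-j), n-j)` for `n ≥ 1`. -/
theorem centralBinom_catalan_convolution :
    ∀ n, 1 ≤ n →
      Nat.choose (2 * n) n
        = 2 * ∑ j ∈ Finset.Icc 1 n, catalan (j - 1) * Nat.choose (2 * (n - j)) (n - j) := by
  intro n hn
  obtain ⟨m, rfl⟩ := Nat.exists_eq_add_of_le' hn
  rw [Finset.Nat.sum_Icc_one_eq_sum_antidiagonal m
    (fun i k => catalan i * Nat.choose (2 * k) k)]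
  exact (two_mul_sum_antidiagonal_catalan_mul_centralBinom m).symm
end
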